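/- Let M be a finite von Neumann algebra in standard form with respect to a faithful normal tracial state τ, let G be a separable locally compact group acting on M by τ-preserving automorphisms γ_g, and let F ⊆ M be a finite-dimensional subspace with γ_g(F) ⊆ F for all g ∈ G. Then the restriction of the action to N = vN(F ∪ {1}), the von Neumann algebra generated by F and 1, defines a compact subsystem: for every y ∈ N the orbit {γ_g(y)Ω_τ : g ∈ G} is totally bounded in the trace norm. -/

import Mathlib

open scoped InnerProductSpace ComplexInnerProductSpace ComplexOrder
open Filter

noncomputable section

/-- A `W*`-dynamical system `(M, φ, α, G)`, presented in standard form: a von Neumann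
algebra `M` acting on the GNS Hilbert space `H = L²(M, φ)` of a faithful normal state `φ`
(so `Ω` is the canonical cyclic and separating unit vector and `φ x = ⟪Ω, x Ω⟫`), together
with the canonical strongly continuous unitary group `U` implementing a `φ`-preserving
action of `G` on `M`, the modular unitary group `Δ` (`t ↦ Δ_φ^{it}`) implementing the
modular automorphism group `σ_t^φ`, and the opposite-algebra embedding
`opp : x ↦ xᵒᵖ = J x* J` onto the commutant `M'`. -/
structure WStar (G : Type) [Group G] [TopologicalSpace G]
    (H : Type) [NormedAddCommGroup H] [InnerProductSpace ℂ H] [CompleteSpace H] where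
  M : VonNeumannAlgebra H
  separable : TopologicalSpace.SeparableSpace H
  Ω : H
  normΩ : ‖Ω‖ = 1
  cyclic : Dense {ξ : H | ∃ x ∈ M, x Ω = ξ}
  separating : ∀ x ∈ M, x Ω = 0 → x = 0
  U : G → H →L[ℂ] H
  U_unitary : ∀ g, U g ∈ unitary (H →L[ℂ] H)
  U_one : U 1 = 1
  U_mul : ∀ g h, U (g * h) = U g * U h
  U_Ω : ∀ g, U g Ω = Ω
  U_mem : ∀ g, ∀ x ∈ M, U g * x * star (U g) ∈ M
  U_cont : ∀ ξ : H, Continuous fun g => U g ξ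
  Δ : ℝ → H →L[ℂ] H
  Δ_unitary : ∀ t, Δ t ∈ unitary (H →L[ℂ] H)
  Δ_zero : Δ 0 = 1
  Δ_add : ∀ s t, Δ (s + t) = Δ s * Δ t
  Δ_Ω : ∀ t, Δ t Ω = Ω
  Δ_mem : ∀ t, ∀ x ∈ M, Δ t * x * star (Δ t) ∈ M
  Δ_cont : ∀ ξ : H, Continuous fun t => Δ t ξ
  U_Δ_comm : ∀ g t, U g * Δ t = Δ t * U g
  opp : (H →L[ℂ] H) →ₗ[ℂ] (H →L[ℂ] H)
  opp_one : opp 1 = 1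
  opp_mul : ∀ x ∈ M, ∀ y ∈ M, opp (x * y) = opp y * opp x
  opp_star : ∀ x ∈ M, opp (star x) = star (opp x)
  opp_commute : ∀ x ∈ M, ∀ y ∈ M, Commute x (opp y)
  opp_inner : ∀ x ∈ M, ∀ y ∈ M, ⟪opp x Ω, opp y Ω⟫_ℂ = ⟪star y Ω, star x Ω⟫_ℂ

namespace WStar

variable {G : Type} [Group G] [TopologicalSpace G]
variable {H : Type} [NormedAddCommGroup H] [InnerProductSpace ℂ H] [CompleteSpace H]

/-- The faithful normal state of the system. -/
def state (𝔑 : WStar G H) (x : H →L[ℂ] H) : ℂ := ⟪𝔑.Ω, x 𝔑.Ω⟫_ℂ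

/-- The action of `g ∈ G` on the algebra, `α_g = Ad(U g)`. -/
def act (𝔑 : WStar G H) (g : G) (x : H →L[ℂ] H) : H →L[ℂ] H := 𝔑.U g * x * star (𝔑.U g)

/-- The modular automorphism group, `σ_t = Ad(Δ^{it})`. -/
def mod (𝔑 : WStar G H) (t : ℝ) (x : H →L[ℂ] H) : H →L[ℂ] H := 𝔑.Δ t * x * star (𝔑.Δ t)

/-- Ergodicity: the fixed point algebra is trivial. -/
def Ergodic (𝔑 : WStar G H) : Prop :=
  ∀ x ∈ 𝔑.M, (∀ g : G, 𝔑.act g x = x) → ∃ c : ℂ, x = c • (1 : H →L[ℂ] H)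

/-- Weak mixing of a system. -/
def WeaklyMixing (𝔑 : WStar G H) : Prop :=
  ∀ ε : ℝ, 0 < ε → ∀ F : Finset (H →L[ℂ] H), (∀ x ∈ F, x ∈ 𝔑.M ∧ 𝔑.state x = 0) →
    ∃ g : G, ∀ x ∈ F, ∀ y ∈ F, ‖𝔑.state (𝔑.act g x * y)‖ < ε

/-- Compactness of a system: every orbit `{α_g(x) Ω}` is totally bounded in the GNS norm. -/
def IsCompactSystem (𝔑 : WStar G H) : Prop :=
  ∀ x ∈ 𝔑.M, TotallyBounded (Set.range fun g : G => (𝔑.act g x) 𝔑.Ω)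

end WStar

/-- Normality (σ-weak continuity) of a map defined on a von Neumann algebra with underlying
set `S`, expressed as weak-operator-to-weak-operator continuity along norm-bounded nets. -/
def IsNormalOn {H K : Type} [NormedAddCommGroup H] [InnerProductSpace ℂ H] [CompleteSpace H]
    [NormedAddCommGroup K] [InnerProductSpace ℂ K] [CompleteSpace K]
    (Φ : (H →L[ℂ] H) → (K →L[ℂ] K)) (S : Set (H →L[ℂ] H)) : Prop :=
  ∀ (ι : Type) (l : Filter ι) (x : ι → H →L[ℂ] H) (x₀ : H →L[ℂ] H) (C : ℝ),
    (∀ i, x i ∈ S) → x₀ ∈ S → (∀ i, ‖x i‖ ≤ C) →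
    (∀ ξ η : H, Tendsto (fun i => ⟪ξ, x i η⟫_ℂ) l (nhds ⟪ξ, x₀ η⟫_ℂ)) →
    ∀ ξ η : K, Tendsto (fun i => ⟪ξ, Φ (x i) η⟫_ℂ) l (nhds ⟪ξ, Φ x₀ η⟫_ℂ)

/-- An element of `J_m(𝔑, 𝔐)`: a `G`-equivariant `(ρ, φ)`-Markov map, i.e. a unital
completely positive map `Φ : N → M` with `φ ∘ Φ = ρ`, `Φ ∘ σ_t^ρ = σ_t^φ ∘ Φ` and
`Φ ∘ α_g = β_g ∘ Φ`.  (The map is recorded as a function on all of `B(H)`; only its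
values on `N = 𝔑.M` are constrained, and only those values are ever used.) -/
structure Markov {G : Type} [Group G] [TopologicalSpace G]
    {H K : Type} [NormedAddCommGroup H] [InnerProductSpace ℂ H] [CompleteSpace H]
    [NormedAddCommGroup K] [InnerProductSpace ℂ K] [CompleteSpace K]
    (𝔑 : WStar G H) (𝔐 : WStar G K) where
  Φ : (H →L[ℂ] H) → (K →L[ℂ] K)
  map_add : ∀ x ∈ 𝔑.M, ∀ y ∈ 𝔑.M, Φ (x + y) = Φ x + Φ y
  map_smul : ∀ (c : ℂ), ∀ x ∈ 𝔑.M, Φ (c • x) = c • Φ x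
  mapsTo : ∀ x ∈ 𝔑.M, Φ x ∈ 𝔐.M
  unital : Φ 1 = 1
  cp : ∀ (n : ℕ) (x : Fin n → H →L[ℂ] H), (∀ i, x i ∈ 𝔑.M) →
    ∀ ξ : Fin n → K, 0 ≤ ∑ i, ∑ l, ⟪ξ i, Φ (star (x i) * x l) (ξ l)⟫_ℂ
  statePres : ∀ x ∈ 𝔑.M, 𝔐.state (Φ x) = 𝔑.state x
  modularEq : ∀ (t : ℝ), ∀ x ∈ 𝔑.M, Φ (𝔑.mod t x) = 𝔐.mod t (Φ x)
  equivariant : ∀ (g : G), ∀ x ∈ 𝔑.M, Φ (𝔑.act g x) = 𝔐.act g (Φ x)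

/-- An element of `J_s(𝔑, 𝔐)`: a joining, i.e. a state `ω` on the algebraic tensor
product `N ⊙ M^op` whose marginals are the two given states and which is invariant under
the doubled group action and the doubled modular flow.  Since such a state is determined
by its values on elementary tensors, it is recorded as the bilinear functional
`ω x y = ω(x ⊗ yᵒᵖ)`; positivity is the statement `ω(z* z) ≥ 0` for
`z = ∑ x i ⊗ (y i)ᵒᵖ`. -/
structure Joining {G : Type} [Group G] [TopologicalSpace G]
    {H K : Type} [NormedAddCommGroup H] [InnerProductSpace ℂ H] [CompleteSpace H]
    [NormedAddCommGroup K] [InnerProductSpace ℂ K] [CompleteSpace K]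
    (𝔑 : WStar G H) (𝔐 : WStar G K) where
  ω : (H →L[ℂ] H) →ₗ[ℂ] (K →L[ℂ] K) →ₗ[ℂ] ℂ
  positive : ∀ (n : ℕ) (x : Fin n → H →L[ℂ] H) (y : Fin n → K →L[ℂ] K),
    (∀ i, x i ∈ 𝔑.M) → (∀ i, y i ∈ 𝔐.M) →
    0 ≤ ∑ i, ∑ l, ω (star (x i) * x l) (y l * star (y i))
  marginal_left : ∀ x ∈ 𝔑.M, ω x 1 = 𝔑.state x
  marginal_right : ∀ y ∈ 𝔐.M, ω 1 y = 𝔐.state y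
  equivariant : ∀ g : G, ∀ x ∈ 𝔑.M, ∀ y ∈ 𝔐.M, ω (𝔑.act g x) (𝔐.act g y) = ω x y
  modular : ∀ t : ℝ, ∀ x ∈ 𝔑.M, ∀ y ∈ 𝔐.M, ω (𝔑.mod t x) (𝔐.mod t y) = ω x y

/-- A `W*`-dynamical system bundled with its underlying Hilbert space. -/
structure SystemOn (G : Type) [Group G] [TopologicalSpace G] where
  carrier : Type
  [i1 : NormedAddCommGroup carrier]
  [i2 : InnerProductSpace ℂ carrier]
  [i3 : CompleteSpace carrier]
  sys : WStar G carrier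

attribute [instance] SystemOn.i1 SystemOn.i2 SystemOn.i3


section AuxTB

/-- Totally bounded sets in a metric space: product. -/
lemma tb_prod' {α β : Type} [PseudoMetricSpace α] [PseudoMetricSpace β] {s : Set α} {t : Set β}
    (hs : TotallyBounded s) (ht : TotallyBounded t) : TotallyBounded (s ×ˢ t) := by
  rw [Metric.totallyBounded_iff] at hs ht ⊢
  intro ε hε
  obtain ⟨t1, ht1, hc1⟩ := hs ε hε
  obtain ⟨t2, ht2, hc2⟩ := ht ε hε
  refine ⟨t1 ×ˢ t2, ht1.prod ht2, ?_⟩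
  rintro ⟨a, b⟩ ⟨ha, hb⟩
  obtain ⟨c, hc, hac⟩ := Set.mem_iUnion₂.1 (hc1 ha)
  obtain ⟨d, hd, hbd⟩ := Set.mem_iUnion₂.1 (hc2 hb)
  refine Set.mem_iUnion₂.2 ⟨(c, d), ⟨hc, hd⟩, ?_⟩
  rw [Metric.mem_ball] at hac hbd ⊢
  rw [Prod.dist_eq]
  exact max_lt hac hbd

/-- If `F` is Lipschitz-controlled by `f` (on indices) and `range f` is totally bounded,
then so is `range F`. -/
lemma tb_lipschitz {ι α β : Type} [PseudoMetricSpace α] [PseudoMetricSpace β]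
    (f : ι → α) (F : ι → β) (C : ℝ) (hC : 0 ≤ C)
    (h : ∀ i j, dist (F i) (F j) ≤ C * dist (f i) (f j))
    (hf : TotallyBounded (Set.range f)) : TotallyBounded (Set.range F) := by
  classical
  rcases isEmpty_or_nonempty ι with hι | hι
  · rw [Set.range_eq_empty]; exact totallyBounded_empty
  rw [Metric.totallyBounded_iff]
  intro ε hε
  have hC1 : 0 < C + 1 := by linarith
  have hδ : 0 < ε / (C + 1) := by positivity
  obtain ⟨t, hts, htf, hcov⟩ := totallyBounded_iff_subset.mp hf _ (Metric.dist_mem_uniformity hδ)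
  choose j hj using fun (c : α) (hc : c ∈ t) => hts hc
  refine ⟨{b | ∃ c, ∃ hc : c ∈ t, F (j c hc) = b}, htf.dependent_image _, ?_⟩
  rintro _ ⟨i, rfl⟩
  obtain ⟨c, hc, hic⟩ := Set.mem_iUnion₂.1 (hcov ⟨i, rfl⟩)
  have hdic : dist (f i) c < ε / (C + 1) := hic
  refine Set.mem_iUnion₂.2 ⟨F (j c hc), ⟨c, hc, rfl⟩, ?_⟩
  rw [Metric.mem_ball]
  have h1 : dist (F i) (F (j c hc)) ≤ C * dist (f i) (f (j c hc)) := h _ _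
  rw [hj c hc] at h1
  calc dist (F i) (F (j c hc)) ≤ C * dist (f i) c := h1
    _ ≤ C * (ε / (C + 1)) := by
        exact mul_le_mul_of_nonneg_left (le_of_lt hdic) hC
    _ < (C + 1) * (ε / (C + 1)) := by
        exact mul_lt_mul_of_pos_right (by linarith) hδ
    _ = ε := by field_simp

/-- Total boundedness via uniform pointwise approximation. -/
lemma tb_pointwise_approx {ι β : Type} [PseudoMetricSpace β] (Fn : ι → β)
    (h : ∀ ε : ℝ, 0 < ε →
      ∃ Fa : ι → β, TotallyBounded (Set.range Fa) ∧ ∀ i, dist (Fn i) (Fa i) ≤ ε) :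
    TotallyBounded (Set.range Fn) := by
  rw [Metric.totallyBounded_iff]
  intro ε hε
  obtain ⟨Fa, hTB, hcl⟩ := h (ε / 3) (by positivity)
  rw [Metric.totallyBounded_iff] at hTB
  obtain ⟨t, htf, hcov⟩ := hTB (ε / 3) (by positivity)
  refine ⟨t, htf, ?_⟩
  rintro _ ⟨i, rfl⟩
  obtain ⟨c, hc, hic⟩ := Set.mem_iUnion₂.1 (hcov ⟨i, rfl⟩)
  have h2 : dist (Fa i) c < ε / 3 := hic
  refine Set.mem_iUnion₂.2 ⟨c, hc, ?_⟩
  rw [Metric.mem_ball]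
  calc dist (Fn i) c ≤ dist (Fn i) (Fa i) + dist (Fa i) c := dist_triangle _ _ _
    _ < ε := by have := hcl i; linarith

end AuxTB
section AuxWStar

variable {G : Type} [Group G] [TopologicalSpace G]
variable {K : Type} [NormedAddCommGroup K] [InnerProductSpace ℂ K] [CompleteSpace K]

namespace WStar

variable (𝔐 : WStar G K)

lemma Ustar_mul (g : G) : star (𝔐.U g) * 𝔐.U g = 1 := (Unitary.mem_iff.mp (𝔐.U_unitary g)).1

lemma U_mul_star (g : G) : 𝔐.U g * star (𝔐.U g) = 1 := (Unitary.mem_iff.mp (𝔐.U_unitary g)).2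

lemma norm_U_apply (g : G) (ξ : K) : ‖𝔐.U g ξ‖ = ‖ξ‖ := by
  have h : star (𝔐.U g) (𝔐.U g ξ) = ξ := by
    have := congrArg (fun T : K →L[ℂ] K => T ξ) (𝔐.Ustar_mul g)
    simpa using this
  have h2 : (⟪𝔐.U g ξ, 𝔐.U g ξ⟫_ℂ) = ⟪ξ, ξ⟫_ℂ := by
    calc ⟪𝔐.U g ξ, 𝔐.U g ξ⟫_ℂ = ⟪star (𝔐.U g) (𝔐.U g ξ), ξ⟫_ℂ := by
          rw [ContinuousLinearMap.star_eq_adjoint, ContinuousLinearMap.adjoint_inner_left]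
      _ = ⟪ξ, ξ⟫_ℂ := by rw [h]
  rw [inner_self_eq_norm_sq_to_K, inner_self_eq_norm_sq_to_K] at h2
  have h3 : ‖𝔐.U g ξ‖ ^ 2 = ‖ξ‖ ^ 2 := by exact_mod_cast h2
  have := congrArg Real.sqrt h3
  simpa [Real.sqrt_sq, norm_nonneg] using this

lemma norm_U_le (g : G) : ‖𝔐.U g‖ ≤ 1 :=
  ContinuousLinearMap.opNorm_le_bound _ zero_le_one fun ξ => by
    rw [𝔐.norm_U_apply, one_mul]

lemma UstarΩ (g : G) : star (𝔐.U g) 𝔐.Ω = 𝔐.Ω := by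
  conv_lhs => rw [← 𝔐.U_Ω g]
  have := congrArg (fun T : K →L[ℂ] K => T 𝔐.Ω) (𝔐.Ustar_mul g)
  simpa using this

lemma act_apply_Ω (g : G) (x : K →L[ℂ] K) : (𝔐.act g x) 𝔐.Ω = 𝔐.U g (x 𝔐.Ω) := by
  show (𝔐.U g * x * star (𝔐.U g)) 𝔐.Ω = _
  rw [ContinuousLinearMap.mul_apply, ContinuousLinearMap.mul_apply, 𝔐.UstarΩ]

lemma act_mem (g : G) {x : K →L[ℂ] K} (hx : x ∈ 𝔐.M) : 𝔐.act g x ∈ 𝔐.M := 𝔐.U_mem g x hx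

lemma norm_act_le (g : G) (x : K →L[ℂ] K) : ‖𝔐.act g x‖ ≤ ‖x‖ := by
  have h1 := norm_mul_le (𝔐.U g * x) (star (𝔐.U g))
  have h2 := norm_mul_le (𝔐.U g) x
  have h3 : ‖star (𝔐.U g)‖ ≤ 1 := by rw [norm_star]; exact 𝔐.norm_U_le g
  have h4 := 𝔐.norm_U_le g
  have h5 : (0:ℝ) ≤ ‖x‖ := norm_nonneg x
  have h6 : (0:ℝ) ≤ ‖𝔐.U g * x‖ := norm_nonneg _
  show ‖𝔐.U g * x * star (𝔐.U g)‖ ≤ ‖x‖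
  nlinarith

lemma act_mul (g : G) (x y : K →L[ℂ] K) : 𝔐.act g (x * y) = 𝔐.act g x * 𝔐.act g y := by
  show 𝔐.U g * (x * y) * star (𝔐.U g)
      = (𝔐.U g * x * star (𝔐.U g)) * (𝔐.U g * y * star (𝔐.U g))
  simp only [mul_assoc]
  rw [← mul_assoc (star (𝔐.U g)) (𝔐.U g), 𝔐.Ustar_mul, one_mul]

lemma act_one (g : G) : 𝔐.act g 1 = 1 := by
  show 𝔐.U g * 1 * star (𝔐.U g) = 1
  rw [mul_one]; exact 𝔐.U_mul_star g

lemma act_star (g : G) (x : K →L[ℂ] K) : 𝔐.act g (star x) = star (𝔐.act g x) := by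
  show 𝔐.U g * star x * star (𝔐.U g) = star (𝔐.U g * x * star (𝔐.U g))
  rw [star_mul, star_mul, star_star, mul_assoc]

lemma act_sub (g : G) (x y : K →L[ℂ] K) : 𝔐.act g (x - y) = 𝔐.act g x - 𝔐.act g y := by
  show 𝔐.U g * (x - y) * star (𝔐.U g) = _
  rw [mul_sub, sub_mul]; rfl

lemma act_add (g : G) (x y : K →L[ℂ] K) : 𝔐.act g (x + y) = 𝔐.act g x + 𝔐.act g y := by
  show 𝔐.U g * (x + y) * star (𝔐.U g) = _
  rw [mul_add, add_mul]; rfl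

lemma norm_star_apply_Ω
    (htrace : ∀ x ∈ 𝔐.M, ∀ y ∈ 𝔐.M, 𝔐.state (x * y) = 𝔐.state (y * x))
    {a : K →L[ℂ] K} (ha : a ∈ 𝔐.M) :
    ‖(star a) 𝔐.Ω‖ = ‖a 𝔐.Ω‖ := by
  have e1 : (⟪star a 𝔐.Ω, star a 𝔐.Ω⟫_ℂ) = 𝔐.state (a * star a) := by
    show _ = ⟪𝔐.Ω, (a * star a) 𝔐.Ω⟫_ℂ
    rw [ContinuousLinearMap.mul_apply]
    calc ⟪star a 𝔐.Ω, star a 𝔐.Ω⟫_ℂ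
        = ⟪(ContinuousLinearMap.adjoint a) 𝔐.Ω, star a 𝔐.Ω⟫_ℂ := by
          rw [← ContinuousLinearMap.star_eq_adjoint]
      _ = ⟪𝔐.Ω, a (star a 𝔐.Ω)⟫_ℂ := ContinuousLinearMap.adjoint_inner_left a _ _
  have e2 : (⟪a 𝔐.Ω, a 𝔐.Ω⟫_ℂ) = 𝔐.state (star a * a) := by
    show _ = ⟪𝔐.Ω, (star a * a) 𝔐.Ω⟫_ℂ
    rw [ContinuousLinearMap.mul_apply]
    calc ⟪a 𝔐.Ω, a 𝔐.Ω⟫_ℂ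
        = ⟪(ContinuousLinearMap.adjoint (star a)) 𝔐.Ω, a 𝔐.Ω⟫_ℂ := by
          rw [← ContinuousLinearMap.star_eq_adjoint, star_star]
      _ = ⟪𝔐.Ω, star a (a 𝔐.Ω)⟫_ℂ := ContinuousLinearMap.adjoint_inner_left (star a) _ _
  have e3 : 𝔐.state (a * star a) = 𝔐.state (star a * a) := htrace a ha (star a) (star_mem ha)
  have h2 : (⟪star a 𝔐.Ω, star a 𝔐.Ω⟫_ℂ) = ⟪a 𝔐.Ω, a 𝔐.Ω⟫_ℂ := by rw [e1, e2, e3]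
  rw [inner_self_eq_norm_sq_to_K, inner_self_eq_norm_sq_to_K] at h2
  have h3 : ‖(star a) 𝔐.Ω‖ ^ 2 = ‖a 𝔐.Ω‖ ^ 2 := by exact_mod_cast h2
  have := congrArg Real.sqrt h3
  simpa [Real.sqrt_sq, norm_nonneg] using this

lemma norm_mul_apply_Ω_le
    (htrace : ∀ x ∈ 𝔐.M, ∀ y ∈ 𝔐.M, 𝔐.state (x * y) = 𝔐.state (y * x))
    {a b : K →L[ℂ] K} (ha : a ∈ 𝔐.M) (hb : b ∈ 𝔐.M) :
    ‖(a * b) 𝔐.Ω‖ ≤ ‖b‖ * ‖a 𝔐.Ω‖ := by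
  have h1 : ‖(a * b) 𝔐.Ω‖ = ‖(star (a * b)) 𝔐.Ω‖ :=
    (𝔐.norm_star_apply_Ω htrace (mul_mem ha hb)).symm
  rw [h1, star_mul, ContinuousLinearMap.mul_apply]
  calc ‖star b ((star a) 𝔐.Ω)‖ ≤ ‖star b‖ * ‖(star a) 𝔐.Ω‖ :=
        ContinuousLinearMap.le_opNorm _ _
    _ = ‖b‖ * ‖a 𝔐.Ω‖ := by rw [norm_star, 𝔐.norm_star_apply_Ω htrace ha]

end WStar

end AuxWStar
section AuxQ

variable {G : Type} [Group G] [TopologicalSpace G]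
variable {K : Type} [NormedAddCommGroup K] [InnerProductSpace ℂ K] [CompleteSpace K]

namespace WStar

variable (𝔐 : WStar G K)

/-- The evaluation-at-`Ω` linear map. -/
def evalΩ : (K →L[ℂ] K) →ₗ[ℂ] K where
  toFun a := a 𝔐.Ω
  map_add' a b := ContinuousLinearMap.add_apply a b 𝔐.Ω
  map_smul' c a := rfl

lemma tb_gen (F : Submodule ℂ (K →L[ℂ] K)) [FiniteDimensional ℂ F]
    (hF_inv : ∀ g : G, ∀ x ∈ F, 𝔐.act g x ∈ F) {x : K →L[ℂ] K} (hx : x ∈ F) :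
    TotallyBounded (Set.range fun g : G => (𝔐.act g x) 𝔐.Ω) := by
  let V : Submodule ℂ K := F.map (𝔐.evalΩ)
  haveI : FiniteDimensional ℂ V := Module.Finite.map F (𝔐.evalΩ)
  haveI : ProperSpace V := FiniteDimensional.proper ℂ V
  have hTB : TotallyBounded ((Subtype.val : V → K) '' Metric.closedBall 0 ‖x‖) :=
    ((isCompact_closedBall (0 : V) ‖x‖).totallyBounded).image uniformContinuous_subtype_val
  refine hTB.subset ?_
  rintro _ ⟨g, rfl⟩
  have hmem : (𝔐.act g x) 𝔐.Ω ∈ V := ⟨𝔐.act g x, hF_inv g x hx, rfl⟩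
  refine ⟨⟨(𝔐.act g x) 𝔐.Ω, hmem⟩, ?_, rfl⟩
  rw [Metric.mem_closedBall, dist_zero_right]
  show ‖(𝔐.act g x) 𝔐.Ω‖ ≤ ‖x‖
  calc ‖(𝔐.act g x) 𝔐.Ω‖ ≤ ‖𝔐.act g x‖ * ‖𝔐.Ω‖ := ContinuousLinearMap.le_opNorm _ _
    _ = ‖𝔐.act g x‖ := by rw [𝔐.normΩ, mul_one]
    _ ≤ ‖x‖ := 𝔐.norm_act_le g x

lemma tb_star
    (htrace : ∀ x ∈ 𝔐.M, ∀ y ∈ 𝔐.M, 𝔐.state (x * y) = 𝔐.state (y * x))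
    {x : K →L[ℂ] K} (hx : x ∈ 𝔐.M)
    (hTB : TotallyBounded (Set.range fun g : G => (𝔐.act g x) 𝔐.Ω)) :
    TotallyBounded (Set.range fun g : G => (𝔐.act g (star x)) 𝔐.Ω) := by
  refine tb_lipschitz (fun g : G => (𝔐.act g x) 𝔐.Ω) _ 1 zero_le_one (fun g h => ?_) hTB
  rw [one_mul, dist_eq_norm, dist_eq_norm, ← ContinuousLinearMap.sub_apply,
    ← ContinuousLinearMap.sub_apply]
  have e : 𝔐.act g (star x) - 𝔐.act h (star x) = star (𝔐.act g x - 𝔐.act h x) := by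
    rw [star_sub, ← 𝔐.act_star, ← 𝔐.act_star]
  rw [e, 𝔐.norm_star_apply_Ω htrace (sub_mem (𝔐.act_mem g hx) (𝔐.act_mem h hx))]

lemma tb_mul
    (htrace : ∀ x ∈ 𝔐.M, ∀ y ∈ 𝔐.M, 𝔐.state (x * y) = 𝔐.state (y * x))
    {x y : K →L[ℂ] K} (hx : x ∈ 𝔐.M) (hy : y ∈ 𝔐.M)
    (hTx : TotallyBounded (Set.range fun g : G => (𝔐.act g x) 𝔐.Ω))
    (hTy : TotallyBounded (Set.range fun g : G => (𝔐.act g y) 𝔐.Ω)) :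
    TotallyBounded (Set.range fun g : G => (𝔐.act g (x * y)) 𝔐.Ω) := by
  refine tb_lipschitz (fun g : G => ((𝔐.act g x) 𝔐.Ω, (𝔐.act g y) 𝔐.Ω)) _
    (‖x‖ + ‖y‖) (by positivity) (fun g h => ?_) ?_
  · set a1 := 𝔐.act g x
    set a2 := 𝔐.act h x
    set b1 := 𝔐.act g y
    set b2 := 𝔐.act h y
    have d1 : dist ((a1) 𝔐.Ω, (b1) 𝔐.Ω) ((a2) 𝔐.Ω, (b2) 𝔐.Ω)
        = max (dist (a1 𝔐.Ω) (a2 𝔐.Ω)) (dist (b1 𝔐.Ω) (b2 𝔐.Ω)) := Prod.dist_eq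
    rw [𝔐.act_mul, 𝔐.act_mul, dist_eq_norm, d1]
    have hA : (a1 * b1) 𝔐.Ω - (a2 * b2) 𝔐.Ω
        = a1 (b1 𝔐.Ω - b2 𝔐.Ω) + ((a1 - a2) * b2) 𝔐.Ω := by
      rw [map_sub, ContinuousLinearMap.mul_apply, ContinuousLinearMap.mul_apply,
        ContinuousLinearMap.mul_apply, ContinuousLinearMap.sub_apply]
      abel
    rw [hA]
    have h1 : ‖a1 (b1 𝔐.Ω - b2 𝔐.Ω)‖ ≤ ‖x‖ * ‖b1 𝔐.Ω - b2 𝔐.Ω‖ := by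
      calc ‖a1 (b1 𝔐.Ω - b2 𝔐.Ω)‖ ≤ ‖a1‖ * ‖b1 𝔐.Ω - b2 𝔐.Ω‖ :=
            ContinuousLinearMap.le_opNorm _ _
        _ ≤ ‖x‖ * ‖b1 𝔐.Ω - b2 𝔐.Ω‖ :=
            mul_le_mul_of_nonneg_right (𝔐.norm_act_le g x) (norm_nonneg _)
    have h2 : ‖((a1 - a2) * b2) 𝔐.Ω‖ ≤ ‖y‖ * ‖a1 𝔐.Ω - a2 𝔐.Ω‖ := by
      have := 𝔐.norm_mul_apply_Ω_le htrace
        (sub_mem (𝔐.act_mem g hx) (𝔐.act_mem h hx)) (𝔐.act_mem h hy)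
      calc ‖((a1 - a2) * b2) 𝔐.Ω‖ ≤ ‖b2‖ * ‖(a1 - a2) 𝔐.Ω‖ := this
        _ ≤ ‖y‖ * ‖(a1 - a2) 𝔐.Ω‖ :=
            mul_le_mul_of_nonneg_right (𝔐.norm_act_le h y) (norm_nonneg _)
        _ = ‖y‖ * ‖a1 𝔐.Ω - a2 𝔐.Ω‖ := by rw [ContinuousLinearMap.sub_apply]
    have hd1 : ‖a1 𝔐.Ω - a2 𝔐.Ω‖ ≤ max (dist (a1 𝔐.Ω) (a2 𝔐.Ω)) (dist (b1 𝔐.Ω) (b2 𝔐.Ω)) := by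
      rw [← dist_eq_norm]; exact le_max_left _ _
    have hd2 : ‖b1 𝔐.Ω - b2 𝔐.Ω‖ ≤ max (dist (a1 𝔐.Ω) (a2 𝔐.Ω)) (dist (b1 𝔐.Ω) (b2 𝔐.Ω)) := by
      rw [← dist_eq_norm]; exact le_max_right _ _
    have hxn : (0:ℝ) ≤ ‖x‖ := norm_nonneg _
    have hyn : (0:ℝ) ≤ ‖y‖ := norm_nonneg _
    calc ‖a1 (b1 𝔐.Ω - b2 𝔐.Ω) + ((a1 - a2) * b2) 𝔐.Ω‖
        ≤ ‖a1 (b1 𝔐.Ω - b2 𝔐.Ω)‖ + ‖((a1 - a2) * b2) 𝔐.Ω‖ := norm_add_le _ _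
      _ ≤ ‖x‖ * ‖b1 𝔐.Ω - b2 𝔐.Ω‖ + ‖y‖ * ‖a1 𝔐.Ω - a2 𝔐.Ω‖ := add_le_add h1 h2
      _ ≤ (‖x‖ + ‖y‖) * max (dist (a1 𝔐.Ω) (a2 𝔐.Ω)) (dist (b1 𝔐.Ω) (b2 𝔐.Ω)) := by
          have := mul_le_mul_of_nonneg_left hd2 hxn
          have := mul_le_mul_of_nonneg_left hd1 hyn
          nlinarith [le_max_left (dist (a1 𝔐.Ω) (a2 𝔐.Ω)) (dist (b1 𝔐.Ω) (b2 𝔐.Ω))]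
  · refine (tb_prod' hTx hTy).subset ?_
    rintro _ ⟨g, rfl⟩
    exact ⟨⟨g, rfl⟩, ⟨g, rfl⟩⟩

lemma tb_add
    {x y : K →L[ℂ] K}
    (hTx : TotallyBounded (Set.range fun g : G => (𝔐.act g x) 𝔐.Ω))
    (hTy : TotallyBounded (Set.range fun g : G => (𝔐.act g y) 𝔐.Ω)) :
    TotallyBounded (Set.range fun g : G => (𝔐.act g (x + y)) 𝔐.Ω) := by
  refine tb_lipschitz (fun g : G => ((𝔐.act g x) 𝔐.Ω, (𝔐.act g y) 𝔐.Ω)) _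
    2 (by norm_num) (fun g h => ?_) ?_
  · rw [𝔐.act_add, 𝔐.act_add, dist_eq_norm, Prod.dist_eq]
    rw [ContinuousLinearMap.add_apply, ContinuousLinearMap.add_apply]
    have e : 𝔐.act g x 𝔐.Ω + 𝔐.act g y 𝔐.Ω - (𝔐.act h x 𝔐.Ω + 𝔐.act h y 𝔐.Ω)
        = (𝔐.act g x 𝔐.Ω - 𝔐.act h x 𝔐.Ω) + (𝔐.act g y 𝔐.Ω - 𝔐.act h y 𝔐.Ω) := by abel
    rw [e]
    calc ‖_ + _‖ ≤ ‖𝔐.act g x 𝔐.Ω - 𝔐.act h x 𝔐.Ω‖ + ‖𝔐.act g y 𝔐.Ω - 𝔐.act h y 𝔐.Ω‖ :=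
          norm_add_le _ _
      _ ≤ 2 * max (dist (𝔐.act g x 𝔐.Ω) (𝔐.act h x 𝔐.Ω))
            (dist (𝔐.act g y 𝔐.Ω) (𝔐.act h y 𝔐.Ω)) := by
          rw [two_mul]
          exact add_le_add (by rw [← dist_eq_norm]; exact le_max_left _ _)
            (by rw [← dist_eq_norm]; exact le_max_right _ _)
  · refine (tb_prod' hTx hTy).subset ?_
    rintro _ ⟨g, rfl⟩
    exact ⟨⟨g, rfl⟩, ⟨g, rfl⟩⟩

end WStar

end AuxQ
/-- **Lemma (finite-dimensional invariant subspaces generate compact subsystems).** Let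
`M` be a finite von Neumann algebra in standard form with respect to a faithful normal
tracial state `τ`, acted on by a separable locally compact group `G` by `τ`-preserving
automorphisms `γ_g`, and let `F ⊆ M` be a finite-dimensional subspace with
`γ_g(F) ⊆ F` for all `g`.  Then the restriction of the action to
`N = vN(F ∪ {1}) = ((F ∪ F* ∪ {1})')'` is compact: for every `y ∈ N` the orbit
`{γ_g(y) Ω_τ : g ∈ G}` is totally bounded in the trace norm. -/

theorem compact_subsystem_from_invariant_finite_dimensional_subspace {G : Type} [Group G] [TopologicalSpace G] [IsTopologicalGroup G]
    [LocallyCompactSpace G] [TopologicalSpace.SeparableSpace G]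
    {K : Type} [NormedAddCommGroup K] [InnerProductSpace ℂ K] [CompleteSpace K]
    (𝔐 : WStar G K)
    (htrace : ∀ x ∈ 𝔐.M, ∀ y ∈ 𝔐.M, 𝔐.state (x * y) = 𝔐.state (y * x))
    (F : Submodule ℂ (K →L[ℂ] K)) [FiniteDimensional ℂ F]
    (hF_sub : (F : Set (K →L[ℂ] K)) ⊆ (𝔐.M : Set (K →L[ℂ] K)))
    (hF_inv : ∀ g : G, ∀ x ∈ F, 𝔐.act g x ∈ F) :
    ∀ y ∈ Set.centralizer (Set.centralizer
        ((F : Set (K →L[ℂ] K)) ∪ (fun x => star x) '' (F : Set (K →L[ℂ] K)) ∪ {1})),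
      TotallyBounded (Set.range fun g : G => (𝔐.act g y) 𝔐.Ω) := by
  classical
  intro y hy
  set S₀ : Set (K →L[ℂ] K) :=
    (F : Set (K →L[ℂ] K)) ∪ (fun x => star x) '' (F : Set (K →L[ℂ] K)) ∪ {1} with hS₀def
  -- basic facts about the generating set
  have hS₀M : S₀ ⊆ (𝔐.M : Set (K →L[ℂ] K)) := by
    rintro s ((hs | ⟨w, hw, rfl⟩) | hs)
    · exact hF_sub hs
    · exact star_mem (hF_sub hw)
    · rw [Set.mem_singleton_iff] at hs; subst hs; exact one_mem 𝔐.M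
  have hS₀star : ∀ s ∈ S₀, star s ∈ S₀ := by
    rintro s ((hs | ⟨w, hw, rfl⟩) | hs)
    · exact Or.inl (Or.inr ⟨s, hs, rfl⟩)
    · rw [star_star]; exact Or.inl (Or.inl hw)
    · rw [Set.mem_singleton_iff] at hs; subst hs
      rw [star_one]; exact Or.inr rfl
  set A : Subalgebra ℂ (K →L[ℂ] K) := Algebra.adjoin ℂ S₀ with hAdef
  have hS₀A : S₀ ⊆ (A : Set (K →L[ℂ] K)) := Algebra.subset_adjoin
  have hAM : ∀ a ∈ A, a ∈ 𝔐.M := by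
    intro a ha
    exact Algebra.adjoin_le
      (show S₀ ⊆ (𝔐.M.toStarSubalgebra.toSubalgebra : Set (K →L[ℂ] K)) from hS₀M) ha
  -- every element of `A` has totally bounded orbit
  have hQ : ∀ a ∈ A, TotallyBounded (Set.range fun g : G => (𝔐.act g a) 𝔐.Ω) := by
    intro a ha
    refine Algebra.adjoin_induction (fun s hs => ?_) (fun r => ?_)
      (fun u v _ _ hu hv => 𝔐.tb_add hu hv)
      (fun u v huA hvA hu hv => 𝔐.tb_mul htrace (hAM u huA) (hAM v hvA) hu hv) ha
    · rcases hs with (hs | ⟨w, hw, rfl⟩) | hs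
      · exact 𝔐.tb_gen F hF_inv hs
      · exact 𝔐.tb_star htrace (hF_sub hw) (𝔐.tb_gen F hF_inv hw)
      · rw [Set.mem_singleton_iff] at hs; subst hs
        have hconst : ∀ g : G, (𝔐.act g (1 : K →L[ℂ] K)) 𝔐.Ω = 𝔐.Ω := by
          intro g; rw [𝔐.act_one]; rfl
        refine (totallyBounded_singleton 𝔐.Ω).subset ?_
        rintro _ ⟨g, rfl⟩
        simpa using hconst g
    · have hconst : ∀ g : G, (𝔐.act g (algebraMap ℂ (K →L[ℂ] K) r)) 𝔐.Ω = r • 𝔐.Ω := by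
        intro g
        rw [Algebra.algebraMap_eq_smul_one]
        show (𝔐.U g * (r • (1:K →L[ℂ] K)) * star (𝔐.U g)) 𝔐.Ω = r • 𝔐.Ω
        rw [mul_smul_comm, smul_mul_assoc, mul_one, 𝔐.U_mul_star]
        rfl
      refine (totallyBounded_singleton (r • 𝔐.Ω)).subset ?_
      rintro _ ⟨g, rfl⟩
      simpa using hconst g
  -- the closed subspace generated by `A Ω`
  set W₀ : Submodule ℂ K := (Subalgebra.toSubmodule A).map (𝔐.evalΩ) with hW₀def
  set W : Submodule ℂ K := W₀.topologicalClosure with hWdef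
  haveI : CompleteSpace W := (W₀.isClosed_topologicalClosure).completeSpace_coe
  set P : K →L[ℂ] K := W.subtypeL.comp (W.orthogonalProjectionOnto) with hPdef
  have hPapp : ∀ ξ : K, P ξ = ((W.orthogonalProjectionOnto ξ : W) : K) := fun ξ => rfl
  have hPW : ∀ ξ : K, P ξ ∈ W := fun ξ => (W.orthogonalProjectionOnto ξ).2
  have hPid : ∀ ξ ∈ W, P ξ = ξ := by
    intro ξ hξ
    rw [hPapp]
    have := Submodule.orthogonalProjectionOnto_mem_subspace_eq_self (K := W) ⟨ξ, hξ⟩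
    rw [show ((⟨ξ, hξ⟩ : W) : K) = ξ from rfl] at this
    rw [this]
  have hPzero : ∀ ξ ∈ Wᗮ, P ξ = 0 := by
    intro ξ hξ
    rw [hPapp, Submodule.orthogonalProjectionOnto_apply_of_mem_orthogonal hξ]
    rfl
  -- invariance of `W` under `A`
  have hW₀inv : ∀ s ∈ A, ∀ w ∈ W₀, s w ∈ W₀ := by
    rintro s hs w ⟨a, haA, rfl⟩
    rw [SetLike.mem_coe, Subalgebra.mem_toSubmodule] at haA
    refine ⟨s * a, ?_, ?_⟩
    · rw [SetLike.mem_coe, Subalgebra.mem_toSubmodule]; exact mul_mem hs haA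
    · show (s * a) 𝔐.Ω = s (a 𝔐.Ω)
      rw [ContinuousLinearMap.mul_apply]
  have hWinv : ∀ s ∈ A, ∀ w ∈ W, s w ∈ W := by
    intro s hs w hw
    have hw' : w ∈ closure (W₀ : Set K) := by
      rw [← Submodule.topologicalClosure_coe]; exact hw
    have h1 : s w ∈ s '' closure (W₀ : Set K) := ⟨w, hw', rfl⟩
    have h2 : s '' closure (W₀ : Set K) ⊆ closure (s '' (W₀ : Set K)) :=
      image_closure_subset_closure_image s.continuous
    have h3 : closure (s '' (W₀ : Set K)) ⊆ closure (W₀ : Set K) := by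
      apply closure_mono
      rintro _ ⟨u, hu, rfl⟩
      exact hW₀inv s hs u hu
    have : s w ∈ closure (W₀ : Set K) := h3 (h2 h1)
    rw [← Submodule.topologicalClosure_coe] at this
    exact this
  -- `P` commutes with all the generators
  have hPcomm : ∀ s ∈ S₀, s * P = P * s := by
    intro s hs
    have hsA : s ∈ A := hS₀A hs
    have hsstarA : star s ∈ A := hS₀A (hS₀star s hs)
    ext ξ
    have h1 : ξ - P ξ ∈ Wᗮ := W.sub_starProjection_mem_orthogonal ξ
    have h2 : s (ξ - P ξ) ∈ Wᗮ := by
      rw [Submodule.mem_orthogonal]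
      intro u hu
      have h3 : star s u ∈ W := hWinv (star s) hsstarA u hu
      have h4 : (⟪star s u, ξ - P ξ⟫_ℂ) = 0 := (Submodule.mem_orthogonal W _).mp h1 _ h3
      calc (⟪u, s (ξ - P ξ)⟫_ℂ)
          = ⟪(ContinuousLinearMap.adjoint s) u, ξ - P ξ⟫_ℂ :=
            (ContinuousLinearMap.adjoint_inner_left s _ _).symm
        _ = ⟪star s u, ξ - P ξ⟫_ℂ := by rw [← ContinuousLinearMap.star_eq_adjoint]
        _ = 0 := h4
    show s (P ξ) = P (s ξ)
    have hdecomp : s ξ = s (P ξ) + s (ξ - P ξ) := by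
      rw [← map_add]
      congr 1
      abel
    rw [hdecomp, map_add, hPid _ (hWinv s hsA _ (hPW ξ)), hPzero _ h2, add_zero]
  have hPc : P ∈ Set.centralizer S₀ := Set.mem_centralizer_iff.mpr hPcomm
  have hyP : P * y = y * P := Set.mem_centralizer_iff.mp hy P hPc
  -- `y Ω` lies in `W`
  have hΩW : 𝔐.Ω ∈ W := by
    apply Submodule.le_topologicalClosure
    refine ⟨1, ?_, ?_⟩
    · rw [SetLike.mem_coe, Subalgebra.mem_toSubmodule]; exact one_mem A
    · show (1 : K →L[ℂ] K) 𝔐.Ω = 𝔐.Ω; rfl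
  have hyΩW : y 𝔐.Ω ∈ W := by
    have e1 : y 𝔐.Ω = P (y 𝔐.Ω) := by
      conv_lhs => rw [← hPid _ hΩW]
      calc y (P 𝔐.Ω) = (y * P) 𝔐.Ω := rfl
        _ = (P * y) 𝔐.Ω := by rw [hyP]
        _ = P (y 𝔐.Ω) := rfl
    rw [e1]
    exact hPW _
  -- conclude by approximation
  apply tb_pointwise_approx
  intro ε hε
  have hcl : y 𝔐.Ω ∈ closure (W₀ : Set K) := by
    rw [← Submodule.topologicalClosure_coe]; exact hyΩW
  obtain ⟨w, hwW₀, hdist⟩ := Metric.mem_closure_iff.mp hcl ε hε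
  obtain ⟨a, haA, rfl⟩ := hwW₀
  rw [SetLike.mem_coe, Subalgebra.mem_toSubmodule] at haA
  refine ⟨fun g => (𝔐.act g a) 𝔐.Ω, hQ a haA, ?_⟩
  intro g
  have e2 : (𝔐.evalΩ) a = a 𝔐.Ω := rfl
  show dist ((𝔐.act g y) 𝔐.Ω) ((𝔐.act g a) 𝔐.Ω) ≤ ε
  rw [𝔐.act_apply_Ω, 𝔐.act_apply_Ω, dist_eq_norm, ← map_sub, 𝔐.norm_U_apply]
  rw [dist_eq_norm] at hdist
  rw [e2] at hdist
  exact le_of_lt hdist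

end
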